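/- Let σ > 0, let h(x) = ⟨w_h, ψ(x)⟩ for some w_h ∈ H′, let g : X → ℝ satisfy |g(x)| ≤ G·σ for all x with G ≥ 0, set f = h − g, and let x* ∈ X satisfy f(x*) ≥ f(x) for all x ∈ X. Let x₁,…,x_{(n−1)L} be the previously selected points, pairwise distinct, and suppose the L-tuple X_n = (x_{(n−1)L+1}, …, x_{nL}) maximizes, over all L-tuples X = (x¹,…,x^L) of points of X, the batch acquisition (1/L)·Σ_{i=1}^L m̂_{(n−1)L}(xⁱ) + ‖w_h‖·(2·√(tr(ĉov_{n−1}(X,X))/L) − √(𝟙ᵀ ĉov_{n−1}(X,X) 𝟙 / L²)). If x* and the points of X_n do not belong to {x₁,…,x_{(n−1)L}}, then (1/L)·Σ_{i=1}^L (f(x*) − f(x_{(n−1)L+i})) ≤ 2·‖w_h‖·√(tr(ĉov_{n−1}(X_n,X_n))/L) + 2·(‖w_h‖ + G)·σ. -/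

import Mathlib

open scoped RealInnerProductSpace
open Matrix

noncomputable section

variable {X : Type*} {H : Type*} {H' : Type*}
  [NormedAddCommGroup H] [InnerProductSpace ℝ H]
  [NormedAddCommGroup H'] [InnerProductSpace ℝ H']

/-- The kernel associated with the feature map `φ`: `k(x,y) = ⟪φ(x), φ(y)⟫`. -/
def ker (φ : X → H) (x y : X) : ℝ := ⟪φ x, φ y⟫

/-- Gram matrix of the points `xs`. -/
def gram (φ : X → H) {t : ℕ} (xs : Fin t → X) : Matrix (Fin t) (Fin t) ℝ :=
  Matrix.of fun i j => ker φ (xs i) (xs j)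

/-- The vector `k_t(a) = (k(a,x₁),…,k(a,x_t))ᵀ`. -/
def kvec (φ : X → H) {t : ℕ} (xs : Fin t → X) (a : X) : Fin t → ℝ :=
  fun i => ker φ a (xs i)

/-- Regularized mean prediction `m̂_t(a) = k_t(a)ᵀ (K_t + σ²I)⁻¹ (h(x₁),…,h(x_t))ᵀ`. -/
def rmeanFn (σ : ℝ) (φ : X → H) (hfun : X → ℝ) {t : ℕ} (xs : Fin t → X) (a : X) : ℝ :=
  kvec φ xs a ⬝ᵥ ((gram φ xs + σ ^ 2 • 1)⁻¹ *ᵥ (fun i => hfun (xs i)))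

/-- Regularized variance `σ̂_t²(a) = k(a,a) − k_t(a)ᵀ (K_t + σ²I)⁻¹ k_t(a)`. -/
def rvarFn (σ : ℝ) (φ : X → H) {t : ℕ} (xs : Fin t → X) (a : X) : ℝ :=
  ker φ a a - kvec φ xs a ⬝ᵥ ((gram φ xs + σ ^ 2 • 1)⁻¹ *ᵥ kvec φ xs a)

/-- `σ̂_t(a) = √(σ̂_t²(a))`. -/
def rsigmaFn (σ : ℝ) (φ : X → H) {t : ℕ} (xs : Fin t → X) (a : X) : ℝ :=
  Real.sqrt (rvarFn σ φ xs a)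

/-- The first `t` points of the sequence `x` (0-indexed: indices `< t`). -/
def prevPts {T : ℕ} (x : Fin T → X) (t : Fin T) : Fin t.val → X :=
  fun j => x ⟨j.val, j.isLt.trans t.isLt⟩

/-- The regularized batch covariance matrix `ĉov(X,X)` after selecting the points `xs`. -/
def rcovMat (σ : ℝ) (φ : X → H) {t L : ℕ} (xs : Fin t → X) (XX : Fin L → X) :
    Matrix (Fin L) (Fin L) ℝ :=
  Matrix.of fun i j =>
    ker φ (XX i) (XX j) -
      kvec φ xs (XX i) ⬝ᵥ ((gram φ xs + σ ^ 2 • 1)⁻¹ *ᵥ kvec φ xs (XX j))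

/-- The regularized batch acquisition function:
`(1/L)·Σᵢ m̂(xⁱ) + w·(2√(tr(ĉov(X,X))/L) − √(𝟙ᵀ ĉov(X,X) 𝟙 / L²))`. -/
def rbatchAcq (σ : ℝ) (φ : X → H) (hfun : X → ℝ) (wnorm : ℝ) {t L : ℕ} (xs : Fin t → X)
    (XX : Fin L → X) : ℝ :=
  (1 / (L : ℝ)) * ∑ i, rmeanFn σ φ hfun xs (XX i) +
    wnorm * (2 * Real.sqrt ((rcovMat σ φ xs XX).trace / (L : ℝ)) -
      Real.sqrt ((∑ i, ∑ j, rcovMat σ φ xs XX i j) / (L : ℝ) ^ 2))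

/-!
Because the previously selected points are distinct, `K + σ²I` is the Gram matrix of the
features `ψ(xⱼ)`, so `m̂` is the least-squares fit of `h = ⟪w_h, ψ ·⟫` on them. For a batch of new
points with `v = Σᵢ ψ(xⁱ)`, the error `Σᵢ h(xⁱ) − Σᵢ m̂(xⁱ)` equals `⟪w_h, r⟫`, where `r` is the
residual of `v` after projection onto the span of the `ψ(xⱼ)`, and
`‖r‖² = 𝟙ᵀ ĉov 𝟙 + σ²·#{(i, j) | xⁱ = xʲ} ≤ 𝟙ᵀ ĉov 𝟙 + σ²L²`.
Cauchy–Schwarz bounds the error at `X_n` and at `x*` (a batch of size one). The acquisition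
of the constant batch `(x*, …, x*)` is `m̂(x*) + ‖w_h‖·σ̂(x*)`, so comparing it with the
acquisition of `X_n` cancels both the `𝟙ᵀ ĉov 𝟙` term and the `σ̂(x*)` term; the perturbation
`g` costs at most `2Gσ`.
-/

section GramResidual

variable {E ι : Type*} [NormedAddCommGroup E] [InnerProductSpace ℝ E]
  [Fintype ι] (ρ : ι → E)

lemma gram_mulVec_apply (c : ι → ℝ) (j : ι) :
    (Matrix.gram ℝ ρ *ᵥ c) j = ⟪ρ j, ∑ i, c i • ρ i⟫ := by
  simp only [mulVec, dotProduct, Matrix.gram_apply, inner_sum, real_inner_smul_right, mul_comm]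

lemma dotProduct_inner_eq_inner_sum (c : ι → ℝ) (w : E) :
    c ⬝ᵥ (fun j => ⟪w, ρ j⟫) = ⟪w, ∑ j, c j • ρ j⟫ := by
  simp only [dotProduct, inner_sum, real_inner_smul_right]

variable [DecidableEq ι]

def gramResidual (v : E) : E :=
  v - ∑ j, ((Matrix.gram ℝ ρ)⁻¹ *ᵥ fun i => ⟪v, ρ i⟫) j • ρ j

lemma inner_gramResidual_eq_zero (hρ : IsUnit (Matrix.gram ℝ ρ).det) (v : E) (j : ι) :
    ⟪ρ j, gramResidual ρ v⟫ = 0 := by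
  have hsolve : Matrix.gram ℝ ρ *ᵥ ((Matrix.gram ℝ ρ)⁻¹ *ᵥ fun i => ⟪v, ρ i⟫)
      = fun i => ⟪v, ρ i⟫ := by
    rw [mulVec_mulVec, mul_nonsing_inv _ hρ, one_mulVec]
  have hj := congrFun hsolve j
  rw [gram_mulVec_apply] at hj
  rw [gramResidual, inner_sub_right, hj, real_inner_comm, sub_self]

lemma inner_sub_dotProduct_gram_inv (w v : E) :
    ⟪w, v⟫ - (fun j => ⟪v, ρ j⟫) ⬝ᵥ ((Matrix.gram ℝ ρ)⁻¹ *ᵥ fun j => ⟪w, ρ j⟫)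
      = ⟪w, gramResidual ρ v⟫ := by
  have hsymm : (Matrix.gram ℝ ρ)⁻¹ᵀ = (Matrix.gram ℝ ρ)⁻¹ := by
    rw [transpose_nonsing_inv, ← conjTranspose_eq_transpose_of_trivial,
      Matrix.isHermitian_gram ℝ ρ]
  rw [dotProduct_mulVec, ← mulVec_transpose, hsymm, dotProduct_inner_eq_inner_sum,
    gramResidual, inner_sub_right]

lemma norm_gramResidual_sq (hρ : IsUnit (Matrix.gram ℝ ρ).det) (v : E) :
    ‖gramResidual ρ v‖ ^ 2
      = ⟪v, v⟫ - (fun j => ⟪v, ρ j⟫) ⬝ᵥ ((Matrix.gram ℝ ρ)⁻¹ *ᵥ fun j => ⟪v, ρ j⟫) := by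
  set fit := ∑ j, ((Matrix.gram ℝ ρ)⁻¹ *ᵥ fun i => ⟪v, ρ i⟫) j • ρ j
  have hv : v = gramResidual ρ v + fit := (sub_add_cancel v fit).symm
  have hfit : ⟪fit, gramResidual ρ v⟫ = 0 := by
    simp only [fit, sum_inner, real_inner_smul_left, inner_gramResidual_eq_zero ρ hρ, mul_zero,
      Finset.sum_const_zero]
  rw [inner_sub_dotProduct_gram_inv, ← real_inner_self_eq_norm_sq]
  nth_rw 3 [hv]
  rw [inner_add_left, hfit, add_zero]

lemma abs_inner_sub_dotProduct_gram_inv_le (hρ : IsUnit (Matrix.gram ℝ ρ).det) (w v : E) :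
    |⟪w, v⟫ - (fun j => ⟪v, ρ j⟫) ⬝ᵥ ((Matrix.gram ℝ ρ)⁻¹ *ᵥ fun j => ⟪w, ρ j⟫)|
      ≤ ‖w‖ * √(⟪v, v⟫ - (fun j => ⟪v, ρ j⟫) ⬝ᵥ ((Matrix.gram ℝ ρ)⁻¹ *ᵥ fun j => ⟪v, ρ j⟫)) := by
  rw [inner_sub_dotProduct_gram_inv, ← norm_gramResidual_sq ρ hρ, Real.sqrt_sq (norm_nonneg _)]
  exact abs_real_inner_le_norm _ _

end GramResidual

lemma sqrt_add_sq_le_sqrt_add (a : ℝ) {b : ℝ} (hb : 0 ≤ b) : √(a + b ^ 2) ≤ √a + b := by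
  rw [Real.sqrt_le_left (by positivity)]
  nlinarith [Real.sq_sqrt' (x := a), le_max_left a 0, Real.sqrt_nonneg a]

lemma sum_sum_ite_eq_le_sq {α : Type*} [DecidableEq α] {L : ℕ} (XX : Fin L → α) :
    ∑ i, ∑ j, (if XX i = XX j then (1 : ℝ) else 0) ≤ (L : ℝ) ^ 2 := by
  calc ∑ i, ∑ j, (if XX i = XX j then (1 : ℝ) else 0) ≤ ∑ _i : Fin L, ∑ _j : Fin L, (1 : ℝ) :=
        Finset.sum_le_sum fun i _ => Finset.sum_le_sum fun j _ => by split_ifs <;> norm_num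
    _ = (L : ℝ) ^ 2 := by simp [sq]

lemma gram_add_smul_one_posDef (φ : X → H) {t : ℕ} (xs : Fin t → X) {σ : ℝ} (hσ : σ ≠ 0) :
    (gram φ xs + σ ^ 2 • (1 : Matrix (Fin t) (Fin t) ℝ)).PosDef :=
  PosDef.posSemidef_add (Matrix.posSemidef_gram ℝ (φ ∘ xs)) (PosDef.one.smul (by positivity))

lemma rbatchAcq_const (σ : ℝ) (φ : X → H) (hfun : X → ℝ) (wnorm : ℝ) {t L : ℕ} (hL : 0 < L)
    (xs : Fin t → X) (a : X) :
    rbatchAcq σ φ hfun wnorm xs (fun _ : Fin L => a)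
      = rmeanFn σ φ hfun xs a + wnorm * √(rvarFn σ φ xs a) := by
  have hc : rcovMat σ φ xs (fun _ : Fin L => a) = of fun _ _ => rvarFn σ φ xs a := rfl
  have hL' : (L : ℝ) ≠ 0 := by positivity
  simp only [rbatchAcq, hc, trace, diag, of_apply, Finset.sum_const, Finset.card_univ,
    Fintype.card_fin, nsmul_eq_mul]
  field_simp
  ring

section Perturbed

variable [DecidableEq X] (φ : X → H) (ψ : X → H') {σ : ℝ}
  (hker : ∀ a b : X, (⟪ψ a, ψ b⟫ : ℝ) = ⟪φ a, φ b⟫ + σ ^ 2 * (if a = b then 1 else 0))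
include hker

lemma gram_add_smul_one_eq_gram {t : ℕ} {xs : Fin t → X} (hinj : Function.Injective xs) :
    gram φ xs + σ ^ 2 • (1 : Matrix (Fin t) (Fin t) ℝ) = Matrix.gram ℝ (ψ ∘ xs) := by
  ext i j
  simp [_root_.gram, ker, Matrix.one_apply, hker, hinj.eq_iff]

lemma sum_kvec_eq_inner {t L : ℕ} (xs : Fin t → X) {XX : Fin L → X} (hnew : ∀ i j, XX i ≠ xs j) :
    ∑ i, kvec φ xs (XX i) = fun j => ⟪∑ i, ψ (XX i), ψ (xs j)⟫ := by
  ext j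
  simp [kvec, ker, sum_inner, hker, hnew _ j]

lemma inner_sum_self_eq {L : ℕ} (XX : Fin L → X) :
    ⟪∑ i, ψ (XX i), ∑ j, ψ (XX j)⟫
      = ∑ i, ∑ j, ker φ (XX i) (XX j) + σ ^ 2 * ∑ i, ∑ j, (if XX i = XX j then (1 : ℝ) else 0) := by
  rw [sum_inner]
  simp only [inner_sum, hker, ker, Finset.sum_add_distrib, Finset.mul_sum]

lemma sum_sum_rcovMat_add_eq {t L : ℕ} (xs : Fin t → X) {XX : Fin L → X}
    (hnew : ∀ i j, XX i ≠ xs j) :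
    ∑ i, ∑ j, rcovMat σ φ xs XX i j + σ ^ 2 * ∑ i, ∑ j, (if XX i = XX j then (1 : ℝ) else 0)
      = ⟪∑ i, ψ (XX i), ∑ j, ψ (XX j)⟫
        - (fun j => ⟪∑ i, ψ (XX i), ψ (xs j)⟫) ⬝ᵥ
            ((gram φ xs + σ ^ 2 • 1)⁻¹ *ᵥ fun j => ⟪∑ i, ψ (XX i), ψ (xs j)⟫) := by
  rw [inner_sum_self_eq φ ψ hker, ← sum_kvec_eq_inner φ ψ hker xs hnew, mulVec_sum,
    sum_dotProduct]
  simp only [dotProduct_sum, rcovMat, of_apply, Finset.sum_sub_distrib]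
  ring

lemma abs_sum_sub_sum_rmeanFn_le (hσ : σ ≠ 0) (wh : H') (hfun : X → ℝ)
    (hh : ∀ a, hfun a = ⟪wh, ψ a⟫) {t L : ℕ} {xs : Fin t → X} (hinj : Function.Injective xs)
    {XX : Fin L → X} (hnew : ∀ i j, XX i ≠ xs j) :
    |∑ i, hfun (XX i) - ∑ i, rmeanFn σ φ hfun xs (XX i)|
      ≤ ‖wh‖ * √(∑ i, ∑ j, rcovMat σ φ xs XX i j
          + σ ^ 2 * ∑ i, ∑ j, (if XX i = XX j then (1 : ℝ) else 0)) := by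
  have hM := gram_add_smul_one_eq_gram φ ψ hker hinj
  have hunit : IsUnit (Matrix.gram ℝ (ψ ∘ xs)).det :=
    hM ▸ (isUnit_iff_isUnit_det _).mp (gram_add_smul_one_posDef φ xs hσ).isUnit
  have hsum_h : ∑ i, hfun (XX i) = ⟪wh, ∑ i, ψ (XX i)⟫ := by
    simp only [inner_sum, hh]
  have hsum_m : ∑ i, rmeanFn σ φ hfun xs (XX i)
      = (fun j => ⟪∑ i, ψ (XX i), ψ (xs j)⟫) ⬝ᵥ
          ((gram φ xs + σ ^ 2 • 1)⁻¹ *ᵥ fun j => ⟪wh, ψ (xs j)⟫) := by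
    simp only [rmeanFn, ← sum_dotProduct, sum_kvec_eq_inner φ ψ hker xs hnew, hh]
  rw [hsum_h, hsum_m, sum_sum_rcovMat_add_eq φ ψ hker xs hnew, hM]
  exact abs_inner_sub_dotProduct_gram_inv_le (ψ ∘ xs) hunit wh _

lemma abs_mean_sub_mean_rmeanFn_le (hσ : 0 < σ) (wh : H') (hfun : X → ℝ)
    (hh : ∀ a, hfun a = ⟪wh, ψ a⟫) {t L : ℕ} {xs : Fin t → X} (hinj : Function.Injective xs)
    {XX : Fin L → X} (hnew : ∀ i j, XX i ≠ xs j) (hL : 0 < L) :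
    |(1 / (L : ℝ)) * ∑ i, hfun (XX i) - (1 / (L : ℝ)) * ∑ i, rmeanFn σ φ hfun xs (XX i)|
      ≤ ‖wh‖ * (√((∑ i, ∑ j, rcovMat σ φ xs XX i j) / (L : ℝ) ^ 2) + σ) := by
  have hLpos : (0 : ℝ) < L := by exact_mod_cast hL
  set S := ∑ i, ∑ j, rcovMat σ φ xs XX i j
  have hδ : σ ^ 2 * ∑ i, ∑ j, (if XX i = XX j then (1 : ℝ) else 0) ≤ (σ * L) ^ 2 := by
    rw [mul_pow]
    exact mul_le_mul_of_nonneg_left (sum_sum_ite_eq_le_sq XX) (sq_nonneg σ)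
  calc |(1 / (L : ℝ)) * ∑ i, hfun (XX i) - (1 / (L : ℝ)) * ∑ i, rmeanFn σ φ hfun xs (XX i)|
      = |∑ i, hfun (XX i) - ∑ i, rmeanFn σ φ hfun xs (XX i)| / L := by
        rw [← mul_sub, abs_mul, abs_of_pos (by positivity), one_div_mul_eq_div]
    _ ≤ ‖wh‖ * √(S + σ ^ 2 * ∑ i, ∑ j, (if XX i = XX j then (1 : ℝ) else 0)) / L := by
        gcongr
        exact abs_sum_sub_sum_rmeanFn_le φ ψ hker hσ.ne' wh hfun hh hinj hnew
    _ ≤ ‖wh‖ * (√S + σ * L) / L := by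
        gcongr
        exact (Real.sqrt_le_sqrt (by linarith)).trans (sqrt_add_sq_le_sqrt_add S (by positivity))
    _ = ‖wh‖ * (√(S / (L : ℝ) ^ 2) + σ) := by
        rw [Real.sqrt_div' _ (sq_nonneg _), Real.sqrt_sq hLpos.le]
        field_simp

lemma abs_sub_rmeanFn_le (hσ : 0 < σ) (wh : H') (hfun : X → ℝ)
    (hh : ∀ a, hfun a = ⟪wh, ψ a⟫) {t : ℕ} {xs : Fin t → X} (hinj : Function.Injective xs)
    {a : X} (ha : ∀ j, a ≠ xs j) :
    |hfun a - rmeanFn σ φ hfun xs a| ≤ ‖wh‖ * (√(rvarFn σ φ xs a) + σ) := by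
  simpa [rcovMat, rvarFn] using abs_mean_sub_mean_rmeanFn_le φ ψ hker hσ wh hfun hh hinj
    (XX := fun _ : Fin 1 => a) (fun _ j => ha j) one_pos

end Perturbed

theorem statement_18_general [DecidableEq X]
    (φ : X → H) (ψ : X → H')
    (σ : ℝ) (hσ : 0 < σ)
    (hker : ∀ a b : X, (⟪ψ a, ψ b⟫ : ℝ) = ⟪φ a, φ b⟫ + σ ^ 2 * (if a = b then 1 else 0))
    (wh : H') (hfun : X → ℝ) (hh : ∀ a, hfun a = ⟪wh, ψ a⟫)
    (g : X → ℝ) (G : ℝ) (hg : ∀ a : X, |g a| ≤ G * σ)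
    (f : X → ℝ) (hfdef : ∀ a, f a = hfun a - g a)
    (xstar : X)
    (n L : ℕ) (hL : 0 < L)
    (xs : Fin ((n - 1) * L) → X) (hinj : Function.Injective xs)
    (Xn : Fin L → X)
    (hacq : ∀ XX : Fin L → X,
      rbatchAcq σ φ hfun ‖wh‖ xs XX ≤ rbatchAcq σ φ hfun ‖wh‖ xs Xn)
    (hstar_new : ∀ j, xstar ≠ xs j)
    (hXn_new : ∀ (i : Fin L) (j), Xn i ≠ xs j) :
    (1 / (L : ℝ)) * ∑ i, (f xstar - f (Xn i)) ≤
      2 * ‖wh‖ * Real.sqrt ((rcovMat σ φ xs Xn).trace / (L : ℝ)) +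
        2 * (‖wh‖ + G) * σ := by
  have hLpos : (0 : ℝ) < L := by exact_mod_cast hL
  have hacq_star := hacq fun _ => xstar
  rw [rbatchAcq_const σ φ hfun ‖wh‖ hL] at hacq_star
  unfold rbatchAcq at hacq_star
  have herr_star := (abs_le.mp (abs_sub_rmeanFn_le φ ψ hker hσ wh hfun hh hinj hstar_new)).2
  have herr_Xn :=
    (abs_le.mp (abs_mean_sub_mean_rmeanFn_le φ ψ hker hσ wh hfun hh hinj hXn_new hL)).1
  have hg_mean : (1 / (L : ℝ)) * ∑ i, (g (Xn i) - g xstar) ≤ 2 * G * σ := by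
    rw [one_div, inv_mul_le_iff₀ hLpos]
    calc ∑ i, (g (Xn i) - g xstar) ≤ ∑ _i : Fin L, 2 * G * σ :=
          Finset.sum_le_sum fun i _ => by
            linarith [abs_le.mp (hg (Xn i)), abs_le.mp (hg xstar)]
      _ = L * (2 * G * σ) := by simp
  have hsplit : (1 / (L : ℝ)) * ∑ i, (f xstar - f (Xn i))
      = hfun xstar - (1 / (L : ℝ)) * ∑ i, hfun (Xn i)
        + (1 / (L : ℝ)) * ∑ i, (g (Xn i) - g xstar) := by
    simp only [hfdef, Finset.sum_sub_distrib, Finset.sum_const, Finset.card_univ,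
      Fintype.card_fin, nsmul_eq_mul]
    field_simp
    ring
  rw [hsplit]
  linarith

/-- Lemma 12 (perturbation setting, batch per-step regret bound). -/
theorem statement_18 [DecidableEq X]
    (φ : X → H) (ψ : X → H')
    (σ : ℝ) (hσ : 0 < σ)
    (hker : ∀ a b : X, (⟪ψ a, ψ b⟫ : ℝ) = ⟪φ a, φ b⟫ + σ ^ 2 * (if a = b then 1 else 0))
    (wh : H') (hfun : X → ℝ) (hh : ∀ a, hfun a = ⟪wh, ψ a⟫)
    (g : X → ℝ) (G : ℝ) (hG : 0 ≤ G) (hg : ∀ a : X, |g a| ≤ G * σ)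
    (f : X → ℝ) (hfdef : ∀ a, f a = hfun a - g a)
    (xstar : X) (hstar : ∀ a : X, f a ≤ f xstar)
    (n L : ℕ) (hL : 0 < L)
    (xs : Fin ((n - 1) * L) → X) (hinj : Function.Injective xs)
    (Xn : Fin L → X)
    (hacq : ∀ XX : Fin L → X,
      rbatchAcq σ φ hfun ‖wh‖ xs XX ≤ rbatchAcq σ φ hfun ‖wh‖ xs Xn)
    (hstar_new : ∀ j, xstar ≠ xs j)
    (hXn_new : ∀ (i : Fin L) (j), Xn i ≠ xs j) :
    (1 / (L : ℝ)) * ∑ i, (f xstar - f (Xn i)) ≤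
      2 * ‖wh‖ * Real.sqrt ((rcovMat σ φ xs Xn).trace / (L : ℝ)) +
        2 * (‖wh‖ + G) * σ :=
  statement_18_general φ ψ σ hσ hker wh hfun hh g G hg f hfdef xstar n L hL xs hinj Xn hacq
    hstar_new hXn_new
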